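/- Let G be an unmixed bipartite graph. Then the semigroup ring R_G generated over K by the monomials u_C = ∏_{v∈C} v, C ranging over minimal vertex covers of G, is normal. -/

import Mathlib

open Finset

/-- `C` is a vertex cover of the graph `G`. -/
def IsVC {α : Type*} (G : SimpleGraph α) (C : Finset α) : Prop :=
  ∀ ⦃u v : α⦄, G.Adj u v → u ∈ C ∨ v ∈ C

/-- `C` is a minimal vertex cover of the graph `G`. -/
def IsMinVC {α : Type*} (G : SimpleGraph α) (C : Finset α) : Prop :=
  IsVC G C ∧ ∀ C' ⊂ C, ¬ IsVC G C'

/-- `G` is unmixed: all minimal vertex covers have the same cardinality. -/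
def Unmixed {α : Type*} (G : SimpleGraph α) : Prop :=
  ∀ C C' : Finset α, IsMinVC G C → IsMinVC G C' → C.card = C'.card

/-- `G` is bipartite with respect to the given sum decomposition of its vertex set:
all edges go between the two parts. -/
def Bip {m n : ℕ} (G : SimpleGraph (Fin m ⊕ Fin n)) : Prop :=
  (∀ i j, ¬ G.Adj (Sum.inl i) (Sum.inl j)) ∧ ∀ i j, ¬ G.Adj (Sum.inr i) (Sum.inr j)

/-- the set `{x_i : i ∈ S} ∪ {y_j : j ∉ S}`, where `x_i = Sum.inl i`, `y_j = Sum.inr j`. -/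
def coverOf {n : ℕ} (S : Finset (Fin n)) : Finset (Fin n ⊕ Fin n) :=
  S.image Sum.inl ∪ Sᶜ.image Sum.inr

/-- the "x-part" `C̄ = {i : x_i ∈ C}` of a set of vertices `C`. -/
def xpart {n : ℕ} (C : Finset (Fin n ⊕ Fin n)) : Finset (Fin n) :=
  Finset.univ.filter fun i => Sum.inl i ∈ C

open MvPolynomial

/-- the type of minimal vertex covers of `G` -/
def MV {n : ℕ} (G : SimpleGraph (Fin n ⊕ Fin n)) : Type :=
  {C : Finset (Fin n ⊕ Fin n) // IsMinVC G C}

/-- the squarefree monomial `u_C = ∏_{v ∈ C} v` -/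
noncomputable def coverMonomial {n : ℕ} (K : Type*) [CommSemiring K]
    (C : Finset (Fin n ⊕ Fin n)) : MvPolynomial (Fin n ⊕ Fin n) K :=
  ∏ v ∈ C, X v

/-- the `K`-algebra map `z_C ↦ u_C`; the toric ideal `I_G` is its kernel. -/
noncomputable def coverMap {n : ℕ} (K : Type*) [CommSemiring K]
    (G : SimpleGraph (Fin n ⊕ Fin n)) :
    MvPolynomial (MV G) K →ₐ[K] MvPolynomial (Fin n ⊕ Fin n) K :=
  aeval fun C => coverMonomial K C.1

/-!
Because `G` is unmixed and contains the perfect matching `x_i — y_i`, its minimal vertex covers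
are exactly the sets `{x_i : i ∈ S} ∪ {y_i : i ∉ S}` with `S` closed under `j ∈ S → i ∈ S` along
the edges `x_i — y_j`. Hence their exponent vectors generate precisely the lattice points `w` of a
rational cone: `w(x_i) + w(y_i)` does not depend on `i`, and `w(x_j) ≤ w(x_i)` along every edge
`x_i — y_j`. (A lattice point of level `t + 1` is the exponent of the cover
`{x_i : w(x_i) ≠ 0} ∪ {y_i : w(x_i) = 0}` plus a lattice point of level `t`.)

A monomial algebra whose exponents are cut out by linear inequalities `φ ≥ 0` is integrally closed
in the polynomial ring: if `p` is integral and `φ` takes a negative minimum `μ` on the support of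
`p`, the `φ`-component of weight `N • μ` of the integral equation of degree `N` is `(p_μ) ^ N ≠ 0`.
As the polynomial ring is normal, so is the monomial algebra.
-/

open Finsupp (weight)
open Sum

theorem AddMonoidHom.eq_weight_single_one {σ M : Type*} [AddCommMonoid M] (φ : (σ →₀ ℕ) →+ M) :
    φ = weight fun s => φ (Finsupp.single s 1) :=
  Finsupp.addHom_ext fun s k => by
    rw [Finsupp.weight_single, ← map_nsmul, Finsupp.smul_single, smul_eq_mul, mul_one]

section WeightedComponents

variable {σ R M : Type*} [CommSemiring R]
  [AddCommMonoid M] [PartialOrder M] [IsOrderedCancelAddMonoid M] {w : σ → M}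

theorem weight_le_of_mem_support_mul {p q : MvPolynomial σ R} {a b : M}
    (hp : ∀ d ∈ p.support, a ≤ weight w d) (hq : ∀ d ∈ q.support, b ≤ weight w d) :
    ∀ d ∈ (p * q).support, a + b ≤ weight w d := by
  classical
  intro d hd
  obtain ⟨x, hx, y, hy, rfl⟩ := Finset.mem_add.mp (support_mul p q hd)
  rw [map_add]
  exact add_le_add (hp x hx) (hq y hy)

theorem weightedHomogeneousComponent_mul_of_le {p q : MvPolynomial σ R} {a b : M}
    (hp : ∀ d ∈ p.support, a ≤ weight w d) (hq : ∀ d ∈ q.support, b ≤ weight w d) :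
    weightedHomogeneousComponent w (a + b) (p * q) =
      weightedHomogeneousComponent w a p * weightedHomogeneousComponent w b q := by
  classical
  ext d
  rw [coeff_weightedHomogeneousComponent, coeff_mul, coeff_mul, Finset.ite_sum_zero]
  refine Finset.sum_congr rfl fun ⟨x, y⟩ hxy => ?_
  rw [Finset.HasAntidiagonal.mem_antidiagonal] at hxy
  simp only [coeff_weightedHomogeneousComponent]
  by_cases hx : coeff x p = 0
  · simp [hx]
  by_cases hy : coeff y q = 0
  · simp [hy]
  have hsplit : weight w d = a + b ↔ weight w x = a ∧ weight w y = b := by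
    rw [← hxy, map_add, eq_comm,
      add_eq_add_iff_eq_and_eq (hp x (mem_support_iff.mpr hx)) (hq y (mem_support_iff.mpr hy))]
    exact and_congr eq_comm eq_comm
  by_cases ha : weight w x = a <;> by_cases hb : weight w y = b <;> simp [hsplit, ha, hb]

theorem weightedHomogeneousComponent_pow_of_le {p : MvPolynomial σ R} {a : M}
    (hp : ∀ d ∈ p.support, a ≤ weight w d) (k : ℕ) :
    (∀ d ∈ (p ^ k).support, k • a ≤ weight w d) ∧
      weightedHomogeneousComponent w (k • a) (p ^ k) = weightedHomogeneousComponent w a p ^ k := by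
  induction k with
  | zero =>
    refine ⟨fun d hd => ?_, ?_⟩
    · rw [pow_zero, ← C_1, C_apply] at hd
      simp [Finset.mem_singleton.mp (support_monomial_subset hd)]
    · rw [pow_zero, pow_zero, zero_smul, ← C_1]
      exact (isWeightedHomogeneous_C w 1).weightedHomogeneousComponent_same
  | succ k ih =>
    rw [succ_nsmul, pow_succ, pow_succ]
    exact ⟨weight_le_of_mem_support_mul ih.1 hp,
      by rw [weightedHomogeneousComponent_mul_of_le ih.1 hp, ih.2]⟩

end WeightedComponents

theorem nonneg_of_mem_support_of_isIntegral {σ R : Type*} [CommRing R] [IsDomain R]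
    {A : Subalgebra R (MvPolynomial σ R)} (φ : (σ →₀ ℕ) →+ ℤ)
    (hA : ∀ f ∈ A, ∀ d ∈ f.support, 0 ≤ φ d) {p : MvPolynomial σ R} (hp : IsIntegral A p) :
    ∀ d ∈ p.support, 0 ≤ φ d := by
  rw [φ.eq_weight_single_one] at hA ⊢
  set w : σ → ℤ := fun s => φ (Finsupp.single s 1)
  by_contra! ⟨d₀, hd₀, hneg⟩
  obtain ⟨d₁, hd₁, hmin⟩ := p.support.exists_min_image (weight w) ⟨d₀, hd₀⟩
  set μ := weight w d₁
  have hμ : μ < 0 := (hmin d₀ hd₀).trans_lt hneg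
  obtain ⟨q, hmonic, heval⟩ := hp
  set N := q.natDegree
  have hsum : ∑ i ∈ Finset.range N, algebraMap A _ (q.coeff i) * p ^ i + p ^ N = 0 := by
    rw [← heval, Polynomial.eval₂_eq_sum_range, Finset.sum_range_succ, hmonic.coeff_natDegree,
      map_one, one_mul]
  -- the component of weight `N • μ` comes from `p ^ N` alone
  have hlower : ∀ i ∈ Finset.range N,
      weightedHomogeneousComponent w (N • μ) (algebraMap A _ (q.coeff i) * p ^ i) = 0 := by
    intro i hi
    refine weightedHomogeneousComponent_eq_zero' _ _ fun d hd => ne_of_gt ?_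
    have hd := weight_le_of_mem_support_mul (hA _ (q.coeff i).2)
      (weightedHomogeneousComponent_pow_of_le hmin i).1 d hd
    have : (N : ℤ) * μ < i * μ := mul_lt_mul_of_neg_right (by simpa using hi) hμ
    simp only [nsmul_eq_mul, zero_add] at hd ⊢
    omega
  have hcomp := congrArg (weightedHomogeneousComponent w (N • μ)) hsum
  rw [map_add, map_sum, Finset.sum_eq_zero hlower, zero_add, map_zero,
    (weightedHomogeneousComponent_pow_of_le hmin N).2] at hcomp
  refine pow_ne_zero N (fun h => ?_) hcomp
  have := congrArg (coeff d₁) h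
  rw [coeff_weightedHomogeneousComponent, if_pos rfl, coeff_zero] at this
  exact (mem_support_iff.mp hd₁) this

theorem isIntegrallyClosed_of_mem_iff_nonneg {σ R : Type*} [CommRing R] [IsDomain R]
    [UniqueFactorizationMonoid R] (A : Subalgebra R (MvPolynomial σ R))
    (Φ : Set ((σ →₀ ℕ) →+ ℤ)) (hA : ∀ p, p ∈ A ↔ ∀ d ∈ p.support, ∀ φ ∈ Φ, 0 ≤ φ d) :
    IsIntegrallyClosed A :=
  have : IsIntegrallyClosedIn A (MvPolynomial σ R) :=
    Subring.isIntegrallyClosedIn_iff.mpr fun p hp => (hA p).mpr fun d hd φ hφ =>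
      nonneg_of_mem_support_of_isIntegral φ (fun f hf => ((hA f).mp hf · · φ hφ)) hp d hd
  .of_isIntegrallyClosed_of_isIntegrallyClosedIn A (MvPolynomial σ R)

section MonomialAlgebra

variable {σ R : Type*} [CommSemiring R] {T : Set (σ →₀ ℕ)}

theorem monomial_one_mem_adjoin {d : σ →₀ ℕ} (hd : d ∈ AddSubmonoid.closure T) :
    monomial d (1 : R) ∈ Algebra.adjoin R ((monomial · (1 : R)) '' T) := by
  induction hd using AddSubmonoid.closure_induction with
  | mem d hd => exact Algebra.subset_adjoin ⟨d, hd, rfl⟩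
  | zero => exact Subalgebra.one_mem _
  | add d e _ _ hd he => simpa [monomial_mul] using Subalgebra.mul_mem _ hd he

theorem mem_adjoin_monomial_one_iff {p : MvPolynomial σ R} :
    p ∈ Algebra.adjoin R ((monomial · (1 : R)) '' T) ↔
      ∀ d ∈ p.support, d ∈ AddSubmonoid.closure T := by
  classical
  constructor
  · intro hp
    induction hp using Algebra.adjoin_induction with
    | mem x hx =>
      obtain ⟨e, he, rfl⟩ := hx
      intro d hd
      rw [Finset.mem_singleton.mp (support_monomial_subset hd)]
      exact AddSubmonoid.subset_closure he
    | algebraMap r =>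
      intro d hd
      rw [algebraMap_eq, C_apply] at hd
      rw [Finset.mem_singleton.mp (support_monomial_subset hd)]
      exact zero_mem _
    | add x y _ _ hx hy =>
      intro d hd
      exact (Finset.mem_union.mp (support_add hd)).elim (hx d) (hy d)
    | mul x y _ _ hx hy =>
      intro d hd
      obtain ⟨e, he, f, hf, rfl⟩ := Finset.mem_add.mp (support_mul x y hd)
      exact add_mem (hx e he) (hy f hf)
  · intro hp
    rw [p.as_sum]
    refine Subalgebra.sum_mem _ fun d hd => ?_
    rw [← mul_one (coeff d p), ← smul_eq_mul, ← smul_monomial]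
    exact Subalgebra.smul_mem _ (monomial_one_mem_adjoin (hp d hd)) _

end MonomialAlgebra

section Covers

variable {n : ℕ} {G : SimpleGraph (Fin n ⊕ Fin n)} {S : Finset (Fin n)} {i : Fin n}

@[simp]
theorem inl_mem_coverOf : inl i ∈ coverOf S ↔ i ∈ S := by
  simp [coverOf]

@[simp]
theorem inr_mem_coverOf : inr i ∈ coverOf S ↔ i ∉ S := by
  simp [coverOf]

theorem card_coverOf (S : Finset (Fin n)) : (coverOf S).card = n := by
  rw [coverOf, Finset.card_union_of_disjoint, Finset.card_image_of_injective _ inl_injective,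
    Finset.card_image_of_injective _ inr_injective, Finset.card_compl, Fintype.card_fin,
    Nat.add_sub_cancel' (card_finset_fin_le S)]
  simp [Finset.disjoint_left]

theorem isVC_coverOf_iff (hbip : Bip G) :
    IsVC G (coverOf S) ↔ ∀ i j, G.Adj (inl i) (inr j) → j ∈ S → i ∈ S := by
  constructor
  · intro hS i j hij hj
    simpa [hj] using hS hij
  · rintro hS (i | i) (j | j) hij
    · exact absurd hij (hbip.1 i j)
    · by_cases hj : j ∈ S <;> simp [hj, hS i j hij]
    · by_cases hi : i ∈ S <;> simp [hi, hS j i hij.symm]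
    · exact absurd hij (hbip.2 i j)

theorem isMinVC_coverOf (hmatch : ∀ i, G.Adj (inl i) (inr i)) (hS : IsVC G (coverOf S)) :
    IsMinVC G (coverOf S) := by
  refine ⟨hS, fun C hsub hC => ?_⟩
  obtain ⟨v, hv, hvC⟩ := Finset.exists_of_ssubset hsub
  obtain ⟨i, rfl | rfl⟩ : ∃ i, v = inl i ∨ v = inr i := by cases v <;> simp
  · have := hsub.subset ((hC (hmatch i)).resolve_left hvC)
    simp_all
  · have := hsub.subset ((hC (hmatch i)).resolve_right hvC)
    simp_all

theorem IsMinVC.eq_coverOf_xpart (hbip : Bip G) (hmatch : ∀ i, G.Adj (inl i) (inr i))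
    (hunm : Unmixed G) {C : Finset (Fin n ⊕ Fin n)} (hC : IsMinVC G C) :
    C = coverOf (xpart C) := by
  have hY : IsMinVC G (coverOf ∅) :=
    isMinVC_coverOf hmatch ((isVC_coverOf_iff hbip).mpr fun _ _ _ h => absurd h (by simp))
  refine (Finset.eq_of_subset_of_card_le (fun v hv => ?_) ?_).symm
  · obtain ⟨i, rfl | rfl⟩ : ∃ i, v = inl i ∨ v = inr i := by cases v <;> simp
    · simpa [xpart] using hv
    · exact (hC.1 (hmatch i)).resolve_left (by simpa [xpart] using hv)
  · rw [hunm C _ hC hY, card_coverOf, card_coverOf]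

end Covers

noncomputable def coverExponent {α : Type*} (C : Finset α) : α →₀ ℕ :=
  ∑ v ∈ C, Finsupp.single v 1

theorem coverExponent_apply {α : Type*} [DecidableEq α] (C : Finset α) (v : α) :
    coverExponent C v = if v ∈ C then 1 else 0 := by
  simp [coverExponent, Finsupp.finsetSum_apply, Finsupp.single_apply]

theorem coverMonomial_eq_monomial {n : ℕ} (K : Type*) [CommSemiring K]
    (C : Finset (Fin n ⊕ Fin n)) : coverMonomial K C = monomial (coverExponent C) 1 := by
  rw [coverExponent, monomial_sum_one]
  rfl

noncomputable def exponentCoord {α : Type*} (v : α) : (α →₀ ℕ) →+ ℤ :=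
  (Nat.castAddMonoidHom ℤ).comp (Finsupp.applyAddHom v)

@[simp]
theorem exponentCoord_apply {α : Type*} (v : α) (d : α →₀ ℕ) : exponentCoord v d = d v := rfl

section CoverCone

variable {n : ℕ} {G : SimpleGraph (Fin n ⊕ Fin n)}

@[simp]
theorem coverExponent_coverOf_inl (S : Finset (Fin n)) (i : Fin n) :
    coverExponent (coverOf S) (inl i) = if i ∈ S then 1 else 0 := by
  simp [coverExponent_apply]

@[simp]
theorem coverExponent_coverOf_inr (S : Finset (Fin n)) (i : Fin n) :
    coverExponent (coverOf S) (inr i) = if i ∈ S then 0 else 1 := by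
  by_cases hi : i ∈ S <;> simp [coverExponent_apply, hi]

variable (G) in
def coverCone : AddSubmonoid ((Fin n ⊕ Fin n) →₀ ℕ) where
  carrier := {w | (∃ t, ∀ i, w (inl i) + w (inr i) = t) ∧
    ∀ i j, G.Adj (inl i) (inr j) → w (inl j) ≤ w (inl i)}
  zero_mem' := ⟨⟨0, by simp⟩, by simp⟩
  add_mem' := by
    rintro w w' ⟨⟨t, ht⟩, hw⟩ ⟨⟨t', ht'⟩, hw'⟩
    refine ⟨⟨t + t', fun i => ?_⟩, fun i j hij => ?_⟩
    · simp only [Finsupp.add_apply]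
      linarith [ht i, ht' i]
    · simp only [Finsupp.add_apply]
      exact add_le_add (hw i j hij) (hw' i j hij)

theorem coverExponent_mem_coverCone (hbip : Bip G) (hmatch : ∀ i, G.Adj (inl i) (inr i))
    (hunm : Unmixed G) {C : Finset (Fin n ⊕ Fin n)} (hC : IsMinVC G C) :
    coverExponent C ∈ coverCone G := by
  have hCeq := hC.eq_coverOf_xpart hbip hmatch hunm
  have hup := (isVC_coverOf_iff hbip).mp (hCeq ▸ hC.1)
  rw [hCeq]
  refine ⟨⟨1, fun i => ?_⟩, fun i j hij => ?_⟩
  · by_cases hi : i ∈ xpart C <;> simp [hi]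
  · by_cases hj : j ∈ xpart C
    · simp [hj, hup i j hij hj]
    · simp [hj]

theorem mem_closure_of_mem_coverCone (hbip : Bip G) (hmatch : ∀ i, G.Adj (inl i) (inr i))
    {w : (Fin n ⊕ Fin n) →₀ ℕ} (hw : w ∈ coverCone G) :
    w ∈ AddSubmonoid.closure (coverExponent '' {C | IsMinVC G C}) := by
  obtain ⟨⟨t, ht⟩, hedge⟩ := hw
  induction t generalizing w with
  | zero =>
    have hw : w = 0 := by
      ext (i | i) <;> simp [Nat.eq_zero_of_add_eq_zero (ht i)]
    exact hw ▸ zero_mem _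
  | succ t ih =>
    set D := Finset.univ.filter fun i => w (inl i) ≠ 0
    have hD : ∀ i, i ∈ D ↔ w (inl i) ≠ 0 := by simp [D]
    have hVC : IsVC G (coverOf D) := (isVC_coverOf_iff hbip).mpr fun i j hij hj => by
      have := hedge i j hij
      simp only [hD] at hj ⊢
      omega
    have hle : coverExponent (coverOf D) ≤ w := fun v => by
      rcases v with i | i <;> have := ht i <;> by_cases hi : w (inl i) = 0 <;> simp [hD, hi] <;>
        omega
    obtain ⟨w', hw'⟩ := le_iff_exists_add.mp hle
    have hv : ∀ v, w v = coverExponent (coverOf D) v + w' v := fun v => by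
      rw [hw', Finsupp.add_apply]
    rw [hw']
    refine add_mem (AddSubmonoid.subset_closure ⟨_, isMinVC_coverOf hmatch hVC, rfl⟩)
      (ih (fun i j hij => ?_) fun i => ?_)
    · have := hedge i j hij
      have hi := hv (inl i)
      have hj := hv (inl j)
      simp only [coverExponent_coverOf_inl, hD] at hi hj
      split_ifs at hi hj <;> omega
    · have := ht i
      have hx := hv (inl i)
      have hy := hv (inr i)
      simp only [coverExponent_coverOf_inl, coverExponent_coverOf_inr, hD] at hx hy
      split_ifs at hx hy <;> omega

theorem closure_coverExponent_eq_coverCone (hbip : Bip G) (hmatch : ∀ i, G.Adj (inl i) (inr i))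
    (hunm : Unmixed G) :
    AddSubmonoid.closure (coverExponent '' {C | IsMinVC G C}) = coverCone G :=
  le_antisymm
    (AddSubmonoid.closure_le.mpr <| by
      rintro _ ⟨C, hC, rfl⟩
      exact coverExponent_mem_coverCone hbip hmatch hunm hC)
    fun _ => mem_closure_of_mem_coverCone hbip hmatch

variable (G) in
def coverConeFunctionals : Set (((Fin n ⊕ Fin n) →₀ ℕ) →+ ℤ) :=
  {φ | ∃ i j, φ = exponentCoord (inl i) + exponentCoord (inr i)
      - exponentCoord (inl j) - exponentCoord (inr j)} ∪
    {φ | ∃ i j, G.Adj (inl i) (inr j) ∧ φ = exponentCoord (inl i) - exponentCoord (inl j)}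

theorem mem_coverCone_iff {w : (Fin n ⊕ Fin n) →₀ ℕ} :
    w ∈ coverCone G ↔ ∀ φ ∈ coverConeFunctionals G, 0 ≤ φ w := by
  constructor
  · rintro ⟨⟨t, ht⟩, hedge⟩ φ (⟨i, j, rfl⟩ | ⟨i, j, hij, rfl⟩)
    · simp only [AddMonoidHom.sub_apply, AddMonoidHom.add_apply, exponentCoord_apply]
      have := ht i
      have := ht j
      omega
    · simp only [AddMonoidHom.sub_apply, exponentCoord_apply]
      have := hedge i j hij
      omega
  · intro h
    have hlevel : ∀ i j, w (inl i) + w (inr i) ≤ w (inl j) + w (inr j) := fun i j => by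
      have := h _ (Or.inl ⟨j, i, rfl⟩)
      simp only [AddMonoidHom.sub_apply, AddMonoidHom.add_apply, exponentCoord_apply] at this
      omega
    refine ⟨?_, fun i j hij => ?_⟩
    · rcases isEmpty_or_nonempty (Fin n) with _ | ⟨⟨i₀⟩⟩
      · exact ⟨0, isEmptyElim⟩
      · exact ⟨_, fun i => (hlevel i i₀).antisymm (hlevel i₀ i)⟩
    · have := h _ (Or.inr ⟨i, j, hij, rfl⟩)
      simp only [AddMonoidHom.sub_apply, exponentCoord_apply] at this
      omega

end CoverCone

/-- the semigroup ring `R_G`, generated over `K` by the monomials `u_C`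
over minimal vertex covers `C` of an unmixed bipartite graph `G`, is normal. -/
theorem stmt_18 {n : ℕ} (K : Type*) [Field K]
    (G : SimpleGraph (Fin n ⊕ Fin n)) (hbip : Bip G)
    (hmatch : ∀ i, G.Adj (Sum.inl i) (Sum.inr i)) (hunm : Unmixed G) :
    IsIntegrallyClosed
      (Algebra.adjoin K {f : MvPolynomial (Fin n ⊕ Fin n) K |
        ∃ C : Finset (Fin n ⊕ Fin n), IsMinVC G C ∧ f = coverMonomial K C}) := by
  have hgen : {f : MvPolynomial (Fin n ⊕ Fin n) K |
      ∃ C : Finset (Fin n ⊕ Fin n), IsMinVC G C ∧ f = coverMonomial K C} =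
      (monomial · (1 : K)) '' (coverExponent '' {C | IsMinVC G C}) := by
    ext f
    simp [coverMonomial_eq_monomial, eq_comm]
  refine isIntegrallyClosed_of_mem_iff_nonneg _ (coverConeFunctionals G) fun p => ?_
  rw [hgen, mem_adjoin_monomial_one_iff, closure_coverExponent_eq_coverCone hbip hmatch hunm]
  exact forall₂_congr fun d _ => mem_coverCone_iff
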